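/- Let q = 2r where r ≥ 2 is an integer. Then the following identity of Möbius transformations of ℝ∞ holds: T_1^{r} = σ ∘ τ_q^{−1} ∘ σ ∘ T_{−1}^{r−2} ∘ τ_q^{−1}, where powers denote iterated composition. -/

import Mathlib

open OnePoint

noncomputable def lamq (q : ℕ) : ℝ := 2 * Real.cos (Real.pi / q)

abbrev RInf : Type := OnePoint ℝ

noncomputable def sigmaFun : RInf → RInf := fun z =>
  match z with
  | Option.none => ((0 : ℝ) : RInf)
  | Option.some x => if x = 0 then (∞ : RInf) else ((-x⁻¹ : ℝ) : RInf)

lemma sigmaFun_invol (z : RInf) : sigmaFun (sigmaFun z) = z := by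
  cases z with
  | none => simp [sigmaFun, OnePoint.infty] <;> rfl
  | some x =>
    by_cases h : x = 0
    · simp only [sigmaFun, h, if_true, if_pos]
      rfl
    · simp only [sigmaFun, h, if_false]
      have h1 : (-x⁻¹ : ℝ) ≠ 0 := by simpa using h
      simp only [h1, if_false]
      have h2 : (-(-x⁻¹)⁻¹ : ℝ) = x := by
        rw [inv_neg, inv_inv, neg_neg]
      rw [h2]
      rfl

noncomputable def sigmaP : Equiv.Perm RInf :=
  ⟨sigmaFun, sigmaFun, sigmaFun_invol, sigmaFun_invol⟩

noncomputable def tauP (q : ℕ) : Equiv.Perm RInf where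
  toFun z := match z with
    | Option.none => (∞ : RInf)
    | Option.some x => Option.some (x + lamq q)
  invFun z := match z with
    | Option.none => (∞ : RInf)
    | Option.some x => Option.some (x - lamq q)
  left_inv z := by cases z <;> simp [OnePoint.infty] <;> rfl
  right_inv z := by cases z <;> simp [OnePoint.infty] <;> rfl

noncomputable def Gq (q : ℕ) : Subgroup (Equiv.Perm RInf) :=
  Subgroup.closure {sigmaP, tauP q}

def FareyVertex (q : ℕ) (v : RInf) : Prop := ∃ g ∈ Gq q, g ∞ = v

def FareyAdj (q : ℕ) (u v : RInf) : Prop :=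
  u ≠ v ∧ ∃ g ∈ Gq q,
    ((g ((0:ℝ) : RInf) = u ∧ g ∞ = v) ∨ (g ((0:ℝ) : RInf) = v ∧ g ∞ = u))

noncomputable def rhoP (q : ℕ) : Equiv.Perm RInf := tauP q * sigmaP

def V0 (q : ℕ) : Set RInf := {v | ∃ i : ℕ, i < q ∧ (rhoP q ^ i) ∞ = v}

def IsFace (q : ℕ) (P : Set RInf) : Prop := ∃ g ∈ Gq q, P = ⇑g '' V0 q

/-- `y` lies in the connected component of `ℝ∞ \ {u, v}` that does not contain `x`. -/
def SepSide (u v x y : RInf) : Prop :=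
  y ∈ ({u, v}ᶜ : Set RInf) ∧ x ∉ connectedComponentIn ({u, v}ᶜ : Set RInf) y

noncomputable def Tq (q : ℕ) (b : ℤ) : RInf → RInf := fun z =>
  match z with
  | Option.none => ((b * lamq q : ℝ) : RInf)
  | Option.some x => if x = 0 then (∞ : RInf) else ((b * lamq q - x⁻¹ : ℝ) : RInf)

noncomputable def RosenValue (q : ℕ) (bs : List ℤ) : RInf := bs.foldr (Tq q) ∞

def IsGeodesicRosen (q : ℕ) (bs : List ℤ) : Prop :=
  bs ≠ [] ∧ RosenValue q bs ≠ ∞ ∧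
  ∀ cs : List ℤ, cs ≠ [] → RosenValue q cs = RosenValue q bs → bs.length ≤ cs.length

def IsPathFrom (q : ℕ) (p : List RInf) (x y : RInf) : Prop :=
  p.Chain' (FareyAdj q) ∧ p.head? = Option.some x ∧ p.getLast? = Option.some y

def IsGeodesicPath (q : ℕ) (p : List RInf) (x y : RInf) : Prop :=
  IsPathFrom q p x y ∧ ∀ p' : List RInf, IsPathFrom q p' x y → p.length ≤ p'.length

/-- `{u, v}` is a pair of `y`-parents of `x`. -/
def IsParentPair (q : ℕ) (y x u v : RInf) : Prop :=
  ∃ g ∈ Gq q, ∃ i : ℤ,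
    g ((rhoP q ^ i) ∞) = x ∧
    ({u, v} : Set RInf) = {g ((rhoP q ^ (i-1)) ∞), g ((rhoP q ^ (i+1)) ∞)} ∧
    SepSide u v x y

/-- `P 0, …, P (n-1)` is the q-chain from `x` to `y`. -/
def IsQChain (q : ℕ) (x y : RInf) (n : ℕ) (P : ℕ → Set RInf) : Prop :=
  1 ≤ n ∧ (∀ j < n, IsFace q (P j)) ∧
  (∃ g ∈ Gq q, ∃ i : ℤ,
      g ((rhoP q ^ i) ∞) = x ∧ P 0 = ⇑g '' V0 q ∧
      SepSide (g ((rhoP q ^ (i-1)) ∞)) (g ((rhoP q ^ (i+1)) ∞)) x y) ∧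
  y ∈ P (n-1) ∧ (∀ j, j < n - 1 → y ∉ P j) ∧
  (∀ j, j + 1 < n → ∃ a b : RInf, FareyAdj q a b ∧ a ∈ P j ∧ b ∈ P j ∧
      (y ∈ ({a, b}ᶜ : Set RInf) ∧
        ∀ w ∈ P j, w ∉ connectedComponentIn ({a, b}ᶜ : Set RInf) y) ∧
      P (j+1) ≠ P j ∧ a ∈ P (j+1) ∧ b ∈ P (j+1))

/-- Fibonacci numbers with `F 0 = 1`, `F 1 = 2`. -/
def fibF : ℕ → ℕ
  | 0 => 1
  | 1 => 2
  | (n+2) => fibF (n+1) + fibF n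

/-- The transformation `T_b = τ_q^b ∘ σ`, i.e. `z ↦ b·λ_q − 1/z`, as a
permutation of `ℝ∞`. -/
noncomputable def TP (q : ℕ) (b : ℤ) : Equiv.Perm RInf := (tauP q) ^ b * sigmaP


/-!
The map `ρ = τ_q ∘ σ` is the Möbius transformation of the matrix `[[λ, -1], [1, 0]]` with
`λ = 2 cos θ`, `θ = π / q`. This matrix has trace `2 cos θ` and determinant `1`, so it is conjugate
to the rotation by `θ`; hence its `q`-th power is `-1`, which acts trivially on `ℝ∞`, and `ρ^q = 1`.
For `q = 2r` this makes `ρ^r` an involution, so `T_1^r = ρ^r = ρ^{-r} = (σ τ^{-1})^r`, and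
regrouping the last word gives `σ τ^{-1} σ (τ^{-1} σ)^{r-2} τ^{-1}`.
-/

open Real

lemma sigmaP_infty : sigmaP ∞ = ((0 : ℝ) : RInf) := rfl

lemma sigmaP_coe (x : ℝ) : sigmaP x = if x = 0 then ∞ else ((-x⁻¹ : ℝ) : RInf) := rfl

lemma tauP_infty (q : ℕ) : tauP q ∞ = ∞ := rfl

lemma tauP_coe (q : ℕ) (x : ℝ) : tauP q x = ((x + lamq q : ℝ) : RInf) := rfl

lemma OnePoint.gl_neg_one_smul {K : Type*} [Field K] [DecidableEq K]
    (c : OnePoint K) : (-1 : GL (Fin 2) K) • c = c := by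
  induction c using OnePoint.rec with
  | infty => simp [smul_infty_eq_ite]
  | coe x => simp [smul_some_eq_ite]

noncomputable abbrev mobiusPerm : GL (Fin 2) ℝ →* Equiv.Perm RInf :=
  MulAction.toPermHom (GL (Fin 2) ℝ) RInf

noncomputable def sigmaGL : GL (Fin 2) ℝ :=
  Matrix.GeneralLinearGroup.mkOfDetNeZero !![0, -1; 1, 0] (by simp [Matrix.det_fin_two])

noncomputable def translationGL (t : ℝ) : GL (Fin 2) ℝ :=
  Matrix.GeneralLinearGroup.mkOfDetNeZero !![1, t; 0, 1] (by simp [Matrix.det_fin_two])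

lemma sigmaP_eq_mobiusPerm : sigmaP = mobiusPerm sigmaGL := by
  ext z
  induction z using OnePoint.rec with
  | infty => simp [sigmaGL, smul_infty_eq_ite, sigmaP_infty]
  | coe x =>
    by_cases hx : x = 0 <;> simp [sigmaGL, smul_some_eq_ite, sigmaP_coe, hx, neg_div]

lemma tauP_eq_mobiusPerm (q : ℕ) : tauP q = mobiusPerm (translationGL (lamq q)) := by
  ext z
  induction z using OnePoint.rec with
  | infty => simp [translationGL, smul_infty_eq_ite, tauP_infty]
  | coe x => simp [translationGL, smul_some_eq_ite, tauP_coe]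

noncomputable def rotationMatrix (θ : ℝ) : Matrix (Fin 2) (Fin 2) ℝ :=
  !![cos θ, -sin θ; sin θ, cos θ]

lemma rotationMatrix_add (α β : ℝ) :
    rotationMatrix (α + β) = rotationMatrix α * rotationMatrix β := by
  ext i j
  fin_cases i <;> fin_cases j <;> simp [rotationMatrix, cos_add, sin_add] <;> ring

lemma rotationMatrix_pow (θ : ℝ) (n : ℕ) : rotationMatrix θ ^ n = rotationMatrix (n * θ) := by
  induction n with
  | zero => simp [rotationMatrix, Matrix.one_fin_two]
  | succ n ih => rw [pow_succ, ih, ← rotationMatrix_add]; push_cast; ring_nf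

lemma rotationMatrix_pi : rotationMatrix π = -1 := by
  simp [rotationMatrix, Matrix.one_fin_two]

lemma semiconjBy_rotationMatrix (θ : ℝ) :
    SemiconjBy !![cos θ, -sin θ; 1, 0] (rotationMatrix θ) !![2 * cos θ, -1; 1, 0] := by
  unfold SemiconjBy
  ext i j
  fin_cases i <;> fin_cases j <;> simp [rotationMatrix] <;> nlinarith [sin_sq_add_cos_sq θ]

lemma pow_eq_neg_one_of_mul_eq_pi {θ : ℝ} (hθ : sin θ ≠ 0) {n : ℕ} (hn : n * θ = π) :
    !![2 * cos θ, -1; 1, 0] ^ n = -1 := by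
  have hP : IsUnit (!![cos θ, -sin θ; (1 : ℝ), 0]).det := by simpa [Matrix.det_fin_two] using hθ
  have h := (semiconjBy_rotationMatrix θ).pow_right n
  rw [SemiconjBy, rotationMatrix_pow, hn, rotationMatrix_pi, mul_neg_one] at h
  calc !![2 * cos θ, -1; 1, 0] ^ n
      = !![2 * cos θ, -1; 1, 0] ^ n * !![cos θ, -sin θ; 1, 0] * !![cos θ, -sin θ; 1, 0]⁻¹ :=
        (Matrix.mul_nonsing_inv_cancel_right _ _ hP).symm
    _ = -1 := by rw [← h, neg_mul, Matrix.mul_nonsing_inv _ hP]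

lemma translationGL_mul_sigmaGL (t : ℝ) :
    ((translationGL t * sigmaGL : GL (Fin 2) ℝ) : Matrix (Fin 2) (Fin 2) ℝ) =
      !![t, -1; 1, 0] := by
  simp [translationGL, sigmaGL]

lemma rhoP_pow_eq_one {q : ℕ} (hq : 2 ≤ q) : rhoP q ^ q = 1 := by
  have hq' : (1 : ℝ) < q := by exact_mod_cast hq
  have hsin : sin (π / q) ≠ 0 :=
    (sin_pos_of_pos_of_lt_pi (by positivity) (div_lt_self pi_pos hq')).ne'
  have hpow : (translationGL (lamq q) * sigmaGL) ^ q = -1 := by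
    ext1
    rw [Units.val_pow_eq_pow_val, translationGL_mul_sigmaGL, lamq]
    exact pow_eq_neg_one_of_mul_eq_pi hsin (by field_simp)
  rw [rhoP, tauP_eq_mobiusPerm, sigmaP_eq_mobiusPerm, ← map_mul, ← map_pow, hpow]
  ext z
  exact OnePoint.gl_neg_one_smul z

lemma pow_eq_inv_pow_of_pow_two_mul_eq_one {G : Type*} [Group G] {g : G} {n : ℕ}
    (h : g ^ (2 * n) = 1) : g ^ n = g⁻¹ ^ n := by
  rw [inv_pow, eq_inv_iff_mul_eq_one, ← pow_add, ← two_mul, h]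

lemma mul_inv_pow_add_two {G : Type*} [Group G] (a b : G) (k : ℕ) :
    (b * a⁻¹) ^ (k + 2) = b * a⁻¹ * b * (a⁻¹ * b) ^ k * a⁻¹ := by
  rw [pow_succ, pow_succ', mul_assoc _ _ (b * a⁻¹), ← mul_assoc _ b, mul_pow_mul]
  simp only [mul_assoc]

/-- the identity `T_1^r = σ τ^{-1} σ T_{-1}^{r-2} τ^{-1}` in the
Hecke group with `q = 2r`. -/
theorem stmt18 (r : ℕ) (hr : 2 ≤ r) :
    (TP (2 * r) 1) ^ r =
      sigmaP * (tauP (2 * r))⁻¹ * sigmaP * (TP (2 * r) (-1)) ^ (r - 2) *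
        (tauP (2 * r))⁻¹ := by
  obtain ⟨k, rfl⟩ : ∃ k, r = k + 2 := ⟨r - 2, by omega⟩
  have hσ : sigmaP⁻¹ = sigmaP := inv_eq_of_mul_eq_one_right (Equiv.ext sigmaFun_invol)
  have hT1 : TP (2 * (k + 2)) 1 = rhoP (2 * (k + 2)) := by rw [TP, zpow_one, rhoP]
  have hTm1 : TP (2 * (k + 2)) (-1) = (tauP (2 * (k + 2)))⁻¹ * sigmaP := by rw [TP, zpow_neg_one]
  rw [hT1, hTm1, Nat.add_sub_cancel, ← mul_inv_pow_add_two,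
    pow_eq_inv_pow_of_pow_two_mul_eq_one (rhoP_pow_eq_one (by omega)), rhoP, mul_inv_rev, hσ]
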